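/- arXiv:2501.00947 — 3 statements merged into one kernel-verified Lean document; each statement's English description precedes it below -/
import Mathlib

section
/- With $f_*$ as above (satisfying $-f_*''+(t-\hat\alpha)^2 f_* = 0$ on $\mathbb{R}_+$, $f_*'(0) = -\hat\alpha$, $f_*(0)=1$, Schwartz decay), one has the moment identities: $\int_0^\infty (t-\hat\alpha)|f_*(t)|^2 dt = 0$, $\int_0^\infty (t-\hat\alpha)^2|f_*(t)|^2 dt = \frac{\hat\alpha}{4}$, and $\int_0^\infty (t-\hat\alpha)^3|f_*(t)|^2 dt = \frac{1}{6}(1-2\hat\alpha^2)$. -/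
open Filter MeasureTheory

private lemma decay_tendsto (g : ℝ → ℝ)
    (hd : ∀ n : ℕ, ∃ C : ℝ, ∀ t : ℝ, 0 ≤ t → |t ^ n * g t| ≤ C) (n : ℕ) :
    Tendsto (fun t => t ^ n * g t) atTop (nhds 0) := by
  obtain ⟨C, hC⟩ := hd (n + 1)
  have hlim : Tendsto (fun t : ℝ => C / t) atTop (nhds 0) := by
    simpa [div_eq_mul_inv] using tendsto_inv_atTop_zero.const_mul C
  apply squeeze_zero_norm' _ hlim
  filter_upwards [eventually_ge_atTop (1:ℝ)] with t ht
  have ht0 : (0:ℝ) < t := lt_of_lt_of_le one_pos ht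
  rw [Real.norm_eq_abs, le_div_iff₀ ht0]
  calc |t ^ n * g t| * t = |t ^ (n+1) * g t| := by
        rw [← abs_of_pos ht0, ← abs_mul]
        rw [abs_of_pos ht0]
        congr 1
        ring
    _ ≤ C := hC t ht0.le

private lemma bounded_pow : ∀ (m : ℕ) (g : ℝ → ℝ),
    (∀ n : ℕ, ∃ C : ℝ, ∀ t : ℝ, 0 ≤ t → |t ^ n * g t| ≤ C) →
    ∃ K : ℝ, ∀ t : ℝ, 0 ≤ t → (1 + t) ^ m * |g t| ≤ K := by
  intro m
  induction m with
  | zero =>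
    intro g hd
    obtain ⟨C, hC⟩ := hd 0
    exact ⟨C, fun t ht => by simpa using hC t ht⟩
  | succ m ih =>
    intro g hd
    obtain ⟨K₁, hK₁⟩ := ih g hd
    obtain ⟨K₂, hK₂⟩ := ih (fun t => t * g t) (fun n => by
      obtain ⟨C, hC⟩ := hd (n+1)
      refine ⟨C, fun t ht => ?_⟩
      have : t ^ n * (t * g t) = t ^ (n+1) * g t := by ring
      rw [this]; exact hC t ht)
    refine ⟨K₁ + K₂, fun t ht => ?_⟩
    have h2 : t * |g t| = |t * g t| := by rw [abs_mul, abs_of_nonneg ht]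
    have h1 : (1+t)^(m+1) * |g t| = (1+t)^m * |g t| + (1+t)^m * (t * |g t|) := by ring
    rw [h1, h2]
    exact add_le_add (hK₁ t ht) (hK₂ t ht)

private lemma poly_tendsto (g : ℝ → ℝ)
    (hd : ∀ n : ℕ, ∃ C : ℝ, ∀ t : ℝ, 0 ≤ t → |t ^ n * g t| ≤ C) (p : Polynomial ℝ) :
    Tendsto (fun t => p.eval t * g t) atTop (nhds 0) := by
  induction p using Polynomial.induction_on' with
  | add p q hp hq => simpa [add_mul] using hp.add hq
  | monomial n a =>
    have h := (decay_tendsto g hd n).const_mul a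
    rw [mul_zero] at h
    simp only [Polynomial.eval_monomial]
    exact h.congr (fun t => by ring)

theorem moment_identities
    (α : ℝ) (hα : 0 < α) (f : ℝ → ℝ)
    (hf : ContDiff ℝ (⊤ : ℕ∞) f)
    -- Schwartz decay on the half-line
    (hdecay : ∀ n k : ℕ, ∃ C : ℝ, ∀ t : ℝ, 0 ≤ t → |t ^ n * iteratedDeriv k f t| ≤ C)
    -- the ODE `-f'' + (t-α)² f = 0` on `ℝ₊`
    (hode : ∀ t : ℝ, 0 ≤ t → -(deriv (deriv f) t) + (t - α) ^ 2 * f t = 0)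
    (hf0 : f 0 = 1) (hfd0 : deriv f 0 = -α) :
    (∫ t in Set.Ioi (0:ℝ), (t - α) * (f t) ^ 2) = 0 ∧
    (∫ t in Set.Ioi (0:ℝ), (t - α) ^ 2 * (f t) ^ 2) = α / 4 ∧
    (∫ t in Set.Ioi (0:ℝ), (t - α) ^ 3 * (f t) ^ 2) = (1 - 2 * α ^ 2) / 6 := by
  have hdf : ∀ n : ℕ, ∃ C : ℝ, ∀ t : ℝ, 0 ≤ t → |t ^ n * f t| ≤ C := fun n => by
    simpa [iteratedDeriv_zero] using hdecay n 0
  have hdf' : ∀ n : ℕ, ∃ C : ℝ, ∀ t : ℝ, 0 ≤ t → |t ^ n * deriv f t| ≤ C := fun n => by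
    simpa [iteratedDeriv_one] using hdecay n 1
  have hf' : ContDiff ℝ (⊤ : ℕ∞) f := hf.of_le (by simp)
  have hcd : ContDiff ℝ (⊤ : ℕ∞) (deriv f) := (contDiff_infty_iff_deriv.mp hf').2
  have cf : Continuous f := hf.continuous
  have cf' : Continuous (deriv f) := hcd.continuous
  have hdiff : Differentiable ℝ f := hf.differentiable (by simp)
  have hdiff' : Differentiable ℝ (deriv f) := hcd.differentiable (by simp)
  -- integrability of (t-α)^k f²
  have hint : ∀ k : ℕ, IntegrableOn (fun t => (t - α) ^ k * (f t) ^ 2) (Set.Ioi 0) := by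
    intro k
    obtain ⟨K₁, hK₁⟩ := bounded_pow (k + 2) f hdf
    obtain ⟨C₀, hC₀⟩ := hdf 0
    have hC₀' : ∀ t : ℝ, 0 ≤ t → |f t| ≤ C₀ := fun t ht => by simpa using hC₀ t ht
    have hC₀0 : 0 ≤ C₀ := le_trans (abs_nonneg _) (hC₀' 0 le_rfl)
    have hK₁0 : 0 ≤ K₁ := le_trans (by positivity) (hK₁ 0 le_rfl)
    apply Integrable.mono'
      ((integrable_inv_one_add_sq.const_mul ((1 + α) ^ k * (K₁ * C₀))).integrableOn)
    · exact (((continuous_id.sub continuous_const).pow k).mul (cf.pow 2)).aestronglyMeasurable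
    · rw [ae_restrict_iff' measurableSet_Ioi]
      refine ae_of_all _ fun t ht => ?_
      have ht0 : (0:ℝ) ≤ t := le_of_lt ht
      rw [Real.norm_eq_abs,
        show (1 + α) ^ k * (K₁ * C₀) * (1 + t ^ 2)⁻¹
          = ((1 + α) ^ k * (K₁ * C₀)) / (1 + t ^ 2) by ring,
        le_div_iff₀ (by positivity)]
      have habs : |t - α| ≤ (1 + α) * (1 + t) := by
        rw [abs_le]; constructor <;> nlinarith [hα.le]
      calc |(t - α) ^ k * (f t) ^ 2| * (1 + t ^ 2)
          = |t - α| ^ k * (f t) ^ 2 * (1 + t ^ 2) := by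
            rw [abs_mul, abs_pow, abs_pow, sq_abs]
        _ ≤ ((1 + α) * (1 + t)) ^ k * (f t) ^ 2 * (1 + t) ^ 2 := by
            have h1 : |t - α| ^ k ≤ ((1 + α) * (1 + t)) ^ k :=
              pow_le_pow_left₀ (abs_nonneg _) habs k
            have h2 : 1 + t ^ 2 ≤ (1 + t) ^ 2 := by nlinarith
            have hnn : (0:ℝ) ≤ |t - α| ^ k * (f t) ^ 2 := by positivity
            exact mul_le_mul (mul_le_mul_of_nonneg_right h1 (sq_nonneg _)) h2
              (by positivity) (by positivity)
        _ = (1 + α) ^ k * (((1 + t) ^ (k + 2) * |f t|) * |f t|) := by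
            rw [mul_pow, ← sq_abs (f t)]; ring
        _ ≤ (1 + α) ^ k * (K₁ * C₀) :=
            mul_le_mul_of_nonneg_left
              (mul_le_mul (hK₁ t ht0) (hC₀' t ht0) (abs_nonneg _) hK₁0)
              (by positivity)
  -- limits at infinity
  have Tf : Tendsto f atTop (nhds 0) := by simpa using decay_tendsto f hdf 0
  have Tf' : Tendsto (deriv f) atTop (nhds 0) := by simpa using decay_tendsto (deriv f) hdf' 0
  have Tp : ∀ k : ℕ, Tendsto (fun t => (t - α) ^ k * f t) atTop (nhds 0) := by
    intro k
    have h := poly_tendsto f hdf ((Polynomial.X - Polynomial.C α) ^ k)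
    simpa using h
  have Tp' : ∀ k : ℕ, Tendsto (fun t => (t - α) ^ k * deriv f t) atTop (nhds 0) := by
    intro k
    have h := poly_tendsto (deriv f) hdf' ((Polynomial.X - Polynomial.C α) ^ k)
    simpa using h
  -- derivative facts at points of Ioi 0
  have hfd : ∀ t : ℝ, HasDerivAt f (deriv f t) t := fun t => (hdiff t).hasDerivAt
  have hfd2 : ∀ t ∈ Set.Ioi (0:ℝ), HasDerivAt (deriv f) ((t - α) ^ 2 * f t) t := by
    intro t ht
    have h := (hdiff' t).hasDerivAt
    have he : deriv (deriv f) t = (t - α) ^ 2 * f t := by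
      have := hode t (le_of_lt ht); linarith
    rwa [he] at h
  have hu : ∀ t : ℝ, HasDerivAt (fun s : ℝ => s - α) 1 t := fun t =>
    (hasDerivAt_id' (x := t)).sub_const α
  -- first identity
  have key₁ : ∫ t in Set.Ioi (0:ℝ), (-2:ℝ) * ((t - α) ^ 1 * (f t) ^ 2)
      = 0 - ((deriv f 0) ^ 2 - ((0:ℝ) - α) ^ 2 * (f 0) ^ 2) := by
    apply integral_Ioi_of_hasDerivAt_of_tendsto
      (f := fun t => (deriv f t) ^ 2 - (t - α) ^ 2 * (f t) ^ 2)
    · exact ((cf'.pow 2).sub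
        (((continuous_id.sub continuous_const).pow 2).mul (cf.pow 2))).continuousWithinAt
    · intro t ht
      have h := ((hfd2 t ht).pow 2).sub (((hu t).pow 2).mul ((hfd t).pow 2))
      refine h.congr_deriv ?_
      simp only [Pi.pow_apply, Pi.mul_apply, Nat.reduceSub]
      push_cast
      ring
    · exact (hint 1).const_mul (-2)
    · have h : Tendsto (fun t => deriv f t * deriv f t - ((t - α) ^ 2 * f t) * f t)
          atTop (nhds (0 * 0 - 0 * 0)) := (Tf'.mul Tf').sub ((Tp 2).mul Tf)
      rw [show (0:ℝ) * 0 - 0 * 0 = 0 by ring] at h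
      exact h.congr fun t => by ring
  rw [MeasureTheory.integral_const_mul, hf0, hfd0] at key₁
  have R₁ : (∫ t in Set.Ioi (0:ℝ), (t - α) * (f t) ^ 2) = 0 := by
    have he : (∫ t in Set.Ioi (0:ℝ), (t - α) * (f t) ^ 2)
        = ∫ t in Set.Ioi (0:ℝ), (t - α) ^ 1 * (f t) ^ 2 := by simp
    rw [he]
    nlinarith [key₁]
  -- second identity
  have key₂ : ∫ t in Set.Ioi (0:ℝ), (-4:ℝ) * ((t - α) ^ 2 * (f t) ^ 2)
      = 0 - (((0:ℝ) - α) * (deriv f 0) ^ 2 - ((0:ℝ) - α) ^ 3 * (f 0) ^ 2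
              - f 0 * deriv f 0) := by
    apply integral_Ioi_of_hasDerivAt_of_tendsto
      (f := fun t => (t - α) * (deriv f t) ^ 2 - (t - α) ^ 3 * (f t) ^ 2 - f t * deriv f t)
    · exact ((((continuous_id.sub continuous_const).mul (cf'.pow 2)).sub
        (((continuous_id.sub continuous_const).pow 3).mul (cf.pow 2))).sub
        (cf.mul cf')).continuousWithinAt
    · intro t ht
      have h := (((hu t).mul ((hfd2 t ht).pow 2)).sub
        (((hu t).pow 3).mul ((hfd t).pow 2))).sub ((hfd t).mul (hfd2 t ht))
      refine h.congr_deriv ?_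
      simp only [Pi.pow_apply, Pi.mul_apply, Nat.reduceSub]
      push_cast
      ring
    · exact (hint 2).const_mul (-4)
    · have h : Tendsto (fun t => ((t - α) ^ 1 * deriv f t) * deriv f t
            - ((t - α) ^ 3 * f t) * f t - f t * deriv f t)
          atTop (nhds (0 * 0 - 0 * 0 - 0 * 0)) :=
        (((Tp' 1).mul Tf').sub ((Tp 3).mul Tf)).sub (Tf.mul Tf')
      rw [show (0:ℝ) * 0 - 0 * 0 - 0 * 0 = 0 by ring] at h
      exact h.congr fun t => by ring
  rw [MeasureTheory.integral_const_mul, hf0, hfd0] at key₂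
  have R₂ : (∫ t in Set.Ioi (0:ℝ), (t - α) ^ 2 * (f t) ^ 2) = α / 4 := by nlinarith [key₂]
  -- third identity
  have key₃ : ∫ t in Set.Ioi (0:ℝ), (-6:ℝ) * ((t - α) ^ 3 * (f t) ^ 2)
      = 0 - (((0:ℝ) - α) ^ 2 * (deriv f 0) ^ 2 - ((0:ℝ) - α) ^ 4 * (f 0) ^ 2
              - 2 * (((0:ℝ) - α) * (f 0 * deriv f 0)) + (f 0) ^ 2) := by
    apply integral_Ioi_of_hasDerivAt_of_tendsto
      (f := fun t => (t - α) ^ 2 * (deriv f t) ^ 2 - (t - α) ^ 4 * (f t) ^ 2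
        - 2 * ((t - α) * (f t * deriv f t)) + (f t) ^ 2)
    · exact ((((((continuous_id.sub continuous_const).pow 2).mul (cf'.pow 2)).sub
        (((continuous_id.sub continuous_const).pow 4).mul (cf.pow 2))).sub
        (continuous_const.mul ((continuous_id.sub continuous_const).mul
          (cf.mul cf')))).add (cf.pow 2)).continuousWithinAt
    · intro t ht
      have h := (((((hu t).pow 2).mul ((hfd2 t ht).pow 2)).sub
        (((hu t).pow 4).mul ((hfd t).pow 2))).sub
        (((hu t).mul ((hfd t).mul (hfd2 t ht))).const_mul 2)).add ((hfd t).pow 2)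
      refine h.congr_deriv ?_
      simp only [Pi.pow_apply, Pi.mul_apply, Nat.reduceSub]
      push_cast
      ring
    · exact (hint 3).const_mul (-6)
    · have h : Tendsto (fun t => ((t - α) ^ 2 * deriv f t) * deriv f t
            - ((t - α) ^ 4 * f t) * f t - 2 * (((t - α) ^ 1 * f t) * deriv f t)
            + f t * f t)
          atTop (nhds (0 * 0 - 0 * 0 - 2 * (0 * 0) + 0 * 0)) :=
        ((((Tp' 2).mul Tf').sub ((Tp 4).mul Tf)).sub
          (((Tp 1).mul Tf').const_mul 2)).add (Tf.mul Tf)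
      rw [show (0:ℝ) * 0 - 0 * 0 - 2 * ((0:ℝ) * 0) + 0 * 0 = 0 by ring] at h
      exact h.congr fun t => by ring
  rw [MeasureTheory.integral_const_mul, hf0, hfd0] at key₃
  have R₃ : (∫ t in Set.Ioi (0:ℝ), (t - α) ^ 3 * (f t) ^ 2) = (1 - 2 * α ^ 2) / 6 := by
    nlinarith [key₃]
  exact ⟨R₁, R₂, R₃⟩
end

section
/- With $f_*$ as above, $\int_0^\infty t\,|f_*'(t)|^2\,dt = \frac{1}{3} + \frac{\hat\alpha^2}{12}$. -/
open MeasureTheory Filter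

theorem weighted_derivative_identity
    (α : ℝ) (hα : 0 < α) (f : ℝ → ℝ)
    (hf : ContDiff ℝ (⊤ : ℕ∞) f)
    -- Schwartz decay on the half-line
    (hdecay : ∀ n k : ℕ, ∃ C : ℝ, ∀ t : ℝ, 0 ≤ t → |t ^ n * iteratedDeriv k f t| ≤ C)
    -- the ODE `-f'' + (t-α)² f = 0` on `ℝ₊`
    (hode : ∀ t : ℝ, 0 ≤ t → -(deriv (deriv f) t) + (t - α) ^ 2 * f t = 0)
    (hf0 : f 0 = 1) (hfd0 : deriv f 0 = -α) :
    (∫ t in Set.Ioi (0:ℝ), t * (deriv f t) ^ 2) = 1/3 + α ^ 2 / 12 := by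
  have hfdiff : Differentiable ℝ f := hf.differentiable (by simp)
  have hfi : ContDiff ℝ ((⊤:ℕ∞):WithTop ℕ∞) f := hf.of_le (by simp)
  have hf' : ContDiff ℝ ((⊤:ℕ∞):WithTop ℕ∞) (deriv f) := (contDiff_infty_iff_deriv.mp hfi).2
  have hf'diff : Differentiable ℝ (deriv f) := hf'.differentiable (by simp)
  -- pointwise decay to zero: t^n * f t → 0 and t^n * f' t → 0
  have hU : ∀ n : ℕ, Tendsto (fun t : ℝ => t ^ n * f t) atTop (nhds 0) := by
    intro n
    obtain ⟨C, hC⟩ := hdecay (n + 1) 0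
    simp only [iteratedDeriv_zero] at hC
    apply squeeze_zero_norm' (a := fun t : ℝ => C / t)
    · filter_upwards [eventually_ge_atTop (1 : ℝ)] with t ht
      have ht0 : (0:ℝ) < t := by linarith
      have h3 : t * |t ^ n * f t| ≤ C := by
        calc t * |t ^ n * f t| = |t ^ (n+1) * f t| := by
              simp only [pow_succ, abs_mul, abs_of_pos ht0]; ring
          _ ≤ C := hC t ht0.le
      rw [Real.norm_eq_abs, le_div_iff₀ ht0]
      linarith
    · exact Tendsto.div_atTop tendsto_const_nhds tendsto_id
  have hV : ∀ n : ℕ, Tendsto (fun t : ℝ => t ^ n * deriv f t) atTop (nhds 0) := by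
    intro n
    obtain ⟨C, hC⟩ := hdecay (n + 1) 1
    simp only [iteratedDeriv_one] at hC
    apply squeeze_zero_norm' (a := fun t : ℝ => C / t)
    · filter_upwards [eventually_ge_atTop (1 : ℝ)] with t ht
      have ht0 : (0:ℝ) < t := by linarith
      have h3 : t * |t ^ n * deriv f t| ≤ C := by
        calc t * |t ^ n * deriv f t| = |t ^ (n+1) * deriv f t| := by
              simp only [pow_succ, abs_mul, abs_of_pos ht0]; ring
          _ ≤ C := hC t ht0.le
      rw [Real.norm_eq_abs, le_div_iff₀ ht0]
      linarith
    · exact Tendsto.div_atTop tendsto_const_nhds tendsto_id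
  -- the antiderivative
  set F : ℝ → ℝ := fun t =>
    (2/3) * ((t - α) * f t * deriv f t - (f t)^2 / 2)
    + (1/6) * ((t - α)^2 * (deriv f t)^2 - (t - α)^4 * (f t)^2)
    + (α/4) * ((t - α) * (deriv f t)^2 - (t - α)^3 * (f t)^2)
    + (3*α/4) * (f t * deriv f t) with hFdef
  -- derivative identity on Ici 0
  have hFderiv : ∀ t ∈ Set.Ici (0:ℝ), HasDerivAt F (t * (deriv f t)^2) t := by
    intro t ht
    have hdd : deriv (deriv f) t = (t - α)^2 * f t := by
      have := hode t ht; linarith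
    have h1 : HasDerivAt f (deriv f t) t := (hfdiff t).hasDerivAt
    have h2 : HasDerivAt (deriv f) ((t - α)^2 * f t) t := by
      rw [← hdd]; exact (hf'diff t).hasDerivAt
    have hid : HasDerivAt (fun t : ℝ => t - α) 1 t := (hasDerivAt_id t).sub_const α
    have A1 : HasDerivAt (fun t => (t - α) * f t * deriv f t)
        ((1 * f t + (t - α) * deriv f t) * deriv f t + (t - α) * f t * ((t - α)^2 * f t)) t :=
      (hid.mul h1).mul h2
    have A2 : HasDerivAt (fun t => (f t)^2 / 2) (2 * f t ^ 1 * deriv f t / 2) t :=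
      (h1.pow 2).div_const 2
    have A3 : HasDerivAt (fun t => (t - α)^2 * (deriv f t)^2)
        ((2 * (t - α) ^ 1 * 1) * (deriv f t)^2 + (t - α)^2 * (2 * deriv f t ^ 1 * ((t - α)^2 * f t))) t :=
      (hid.pow 2).mul (h2.pow 2)
    have A4 : HasDerivAt (fun t => (t - α)^4 * (f t)^2)
        ((4 * (t - α) ^ 3 * 1) * (f t)^2 + (t - α)^4 * (2 * f t ^ 1 * deriv f t)) t :=
      (hid.pow 4).mul (h1.pow 2)
    have A5 : HasDerivAt (fun t => (t - α) * (deriv f t)^2)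
        (1 * (deriv f t)^2 + (t - α) * (2 * deriv f t ^ 1 * ((t - α)^2 * f t))) t :=
      hid.mul (h2.pow 2)
    have A6 : HasDerivAt (fun t => (t - α)^3 * (f t)^2)
        ((3 * (t - α) ^ 2 * 1) * (f t)^2 + (t - α)^3 * (2 * f t ^ 1 * deriv f t)) t :=
      (hid.pow 3).mul (h1.pow 2)
    have A7 : HasDerivAt (fun t => f t * deriv f t)
        (deriv f t * deriv f t + f t * ((t - α)^2 * f t)) t := h1.mul h2
    have H := ((((A1.sub A2).const_mul (2/3)).add (((A3.sub A4)).const_mul (1/6))).add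
        ((A5.sub A6).const_mul (α/4))).add (A7.const_mul (3*α/4))
    convert H using 1
    · rfl
    · rfl
    · rfl
    ring
  -- F tends to 0 at infinity
  have hFlim : Tendsto F atTop (nhds 0) := by
    have m1 : Tendsto (fun t : ℝ => (t^1 * f t) * (t^0 * deriv f t)) atTop (nhds 0) := by
      simpa using (hU 1).mul (hV 0)
    have m0 : Tendsto (fun t : ℝ => (t^0 * f t) * (t^0 * deriv f t)) atTop (nhds 0) := by
      simpa using (hU 0).mul (hV 0)
    have uu : ∀ i j : ℕ, Tendsto (fun t : ℝ => (t^i * f t) * (t^j * f t)) atTop (nhds 0) := by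
      intro i j; simpa using (hU i).mul (hU j)
    have vv : ∀ i j : ℕ, Tendsto (fun t : ℝ => (t^i * deriv f t) * (t^j * deriv f t)) atTop (nhds 0) := by
      intro i j; simpa using (hV i).mul (hV j)
    have uv : ∀ i j : ℕ, Tendsto (fun t : ℝ => (t^i * f t) * (t^j * deriv f t)) atTop (nhds 0) := by
      intro i j; simpa using (hU i).mul (hV j)
    have big : Tendsto (fun t : ℝ =>
        (2/3) * (((t^1 * f t) * (t^0 * deriv f t) - α * ((t^0 * f t) * (t^0 * deriv f t))) - ((t^0 * f t) * (t^0 * f t)) / 2)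
        + (1/6) * ( ((t^1 * deriv f t) * (t^1 * deriv f t) - 2*α*((t^1 * deriv f t) * (t^0 * deriv f t)) + α^2 * ((t^0 * deriv f t) * (t^0 * deriv f t)))
            - ((t^4 * f t) * (t^0 * f t) - 4*α*((t^3 * f t)*(t^0*f t)) + 6*α^2*((t^2*f t)*(t^0*f t)) - 4*α^3*((t^1*f t)*(t^0*f t)) + α^4*((t^0*f t)*(t^0*f t))))
        + (α/4) * ( ((t^1 * deriv f t)*(t^0*deriv f t) - α*((t^0*deriv f t)*(t^0*deriv f t)))
            - ((t^3*f t)*(t^0*f t) - 3*α*((t^2*f t)*(t^0*f t)) + 3*α^2*((t^1*f t)*(t^0*f t)) - α^3*((t^0*f t)*(t^0*f t))))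
        + (3*α/4) * ((t^0*f t)*(t^0*deriv f t))) atTop (nhds
        ((2/3) * ((0 - α * 0) - 0/2) + (1/6)*((0 - 2*α*0 + α^2*0) - (0 - 4*α*0 + 6*α^2*0 - 4*α^3*0 + α^4*0))
        + (α/4) * ((0 - α*0) - (0 - 3*α*0 + 3*α^2*0 - α^3*0)) + (3*α/4)*0)) := by
      refine Tendsto.add (Tendsto.add (Tendsto.add ?_ ?_) ?_) ?_
      · exact (((uv 1 0).sub ((uv 0 0).const_mul α)).sub ((uu 0 0).div_const 2)).const_mul _
      · refine Tendsto.const_mul _ (Tendsto.sub ?_ ?_)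
        · exact ((vv 1 1).sub ((vv 1 0).const_mul (2*α))).add ((vv 0 0).const_mul (α^2))
        · exact (((((uu 4 0).sub ((uu 3 0).const_mul (4*α))).add ((uu 2 0).const_mul (6*α^2))).sub
            ((uu 1 0).const_mul (4*α^3))).add ((uu 0 0).const_mul (α^4)))
      · refine Tendsto.const_mul _ (Tendsto.sub ?_ ?_)
        · exact (vv 1 0).sub ((vv 0 0).const_mul α)
        · exact (((uu 3 0).sub ((uu 2 0).const_mul (3*α))).add ((uu 1 0).const_mul (3*α^2))).sub
            ((uu 0 0).const_mul (α^3))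
      · exact (uv 0 0).const_mul _
    have heq : F = (fun t : ℝ =>
        (2/3) * (((t^1 * f t) * (t^0 * deriv f t) - α * ((t^0 * f t) * (t^0 * deriv f t))) - ((t^0 * f t) * (t^0 * f t)) / 2)
        + (1/6) * ( ((t^1 * deriv f t) * (t^1 * deriv f t) - 2*α*((t^1 * deriv f t) * (t^0 * deriv f t)) + α^2 * ((t^0 * deriv f t) * (t^0 * deriv f t)))
            - ((t^4 * f t) * (t^0 * f t) - 4*α*((t^3 * f t)*(t^0*f t)) + 6*α^2*((t^2*f t)*(t^0*f t)) - 4*α^3*((t^1*f t)*(t^0*f t)) + α^4*((t^0*f t)*(t^0*f t))))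
        + (α/4) * ( ((t^1 * deriv f t)*(t^0*deriv f t) - α*((t^0*deriv f t)*(t^0*deriv f t)))
            - ((t^3*f t)*(t^0*f t) - 3*α*((t^2*f t)*(t^0*f t)) + 3*α^2*((t^1*f t)*(t^0*f t)) - α^3*((t^0*f t)*(t^0*f t))))
        + (3*α/4) * ((t^0*f t)*(t^0*deriv f t))) := by
      funext t; simp only [hFdef, pow_zero, pow_one, one_mul]; ring
    rw [heq]
    convert big using 2
    ring
  -- integrability of the integrand
  have hint : IntegrableOn (fun t : ℝ => t * (deriv f t)^2) (Set.Ioi (0:ℝ)) := by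
    obtain ⟨C0, hC0⟩ := hdecay 0 1
    obtain ⟨C1, hC1⟩ := hdecay 1 1
    obtain ⟨C2, hC2⟩ := hdecay 2 1
    simp only [iteratedDeriv_one, pow_zero, one_mul] at hC0 hC1 hC2
    have hK : ∀ t : ℝ, 0 ≤ t → |t * (deriv f t)^2| ≤ (C1*C0 + C2*C1) / (1 + t^2) := by
      intro t ht
      have h1 : (0:ℝ) < 1 + t^2 := by positivity
      rw [le_div_iff₀ h1]
      have e1 : |t * (deriv f t)^2| * (1 + t^2) =
          |t * deriv f t| * |deriv f t| + |t^2 * deriv f t| * |t * deriv f t| := by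
        simp only [abs_mul, abs_pow, abs_of_nonneg ht]
        ring
      rw [e1]
      have b0 := hC0 t ht
      have b1 := hC1 t ht; rw [pow_one] at b1
      have b2 := hC2 t ht
      have n0 : (0:ℝ) ≤ |deriv f t| := abs_nonneg _
      have n1 : (0:ℝ) ≤ |t * deriv f t| := abs_nonneg _
      have n2 : (0:ℝ) ≤ |t^2 * deriv f t| := abs_nonneg _
      nlinarith [mul_le_mul b1 b0 n0 (le_trans n1 b1), mul_le_mul b2 b1 n1 (le_trans n2 b2)]
    have hcont : Continuous (fun t : ℝ => t * (deriv f t)^2) := by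
      exact continuous_id.mul (hf'.continuous.pow 2)
    have hbound : Integrable (fun t : ℝ => (C1*C0 + C2*C1) / (1 + t^2)) (volume.restrict (Set.Ioi (0:ℝ))) := by
      simpa [div_eq_mul_inv] using (integrable_inv_one_add_sq.restrict (s := Set.Ioi (0:ℝ))).const_mul (C1*C0 + C2*C1)
    refine Integrable.mono' hbound hcont.aestronglyMeasurable ?_
    filter_upwards [ae_restrict_mem measurableSet_Ioi] with t ht
    exact hK t (le_of_lt ht)
  -- put it together
  have key := integral_Ioi_of_hasDerivAt_of_tendsto' hFderiv hint hFlim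
  rw [key, hFdef]
  simp only [hf0, hfd0]
  ring
end

section
/- Let $\hat\alpha \in (0,1)$ and define $C_* = -\int_0^\infty \tau|f_*'(\tau)|^2 d\tau - \int_0^\infty [\tau^2(\tau-\hat\alpha) - \tau(\tau-\hat\alpha)^2]|f_*(\tau)|^2 d\tau$ with $f_*$ as above. Then $C_* = -\frac{\hat\alpha^2 + 1}{3}$. -/
open MeasureTheory

theorem Cstar_value
    (α : ℝ) (hα : 0 < α) (hα1 : α < 1) (f : ℝ → ℝ)
    (hf : ContDiff ℝ (⊤ : ℕ∞) f)
    -- Schwartz decay on the half-line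
    (hdecay : ∀ n k : ℕ, ∃ C : ℝ, ∀ t : ℝ, 0 ≤ t → |t ^ n * iteratedDeriv k f t| ≤ C)
    -- the ODE `-f'' + (t-α)² f = 0` on `ℝ₊`
    (hode : ∀ t : ℝ, 0 ≤ t → -(deriv (deriv f) t) + (t - α) ^ 2 * f t = 0)
    (hf0 : f 0 = 1) (hfd0 : deriv f 0 = -α) :
    (-(∫ t in Set.Ioi (0:ℝ), t * (deriv f t) ^ 2) -
      ∫ t in Set.Ioi (0:ℝ), (t ^ 2 * (t - α) - t * (t - α) ^ 2) * (f t) ^ 2) =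
    -((α ^ 2 + 1) / 3) := by
  have hf1 : Differentiable ℝ f := hf.differentiable (by simp)
  have hfi : ContDiff ℝ ((⊤ : ℕ∞) : WithTop ℕ∞) f := hf.of_le (by simp)
  have hf2 : Differentiable ℝ (deriv f) :=
    (contDiff_infty_iff_deriv.mp hfi).2.differentiable (by norm_num)
  set D := deriv f with hD
  have hDf : ∀ x : ℝ, HasDerivAt f (D x) x := fun x => (hf1 x).hasDerivAt
  have hDD : ∀ x : ℝ, 0 ≤ x → HasDerivAt D ((x - α) ^ 2 * f x) x := by
    intro x hx
    have h := (hf2 x).hasDerivAt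
    have h2 : deriv D x = (x - α) ^ 2 * f x := by
      have := hode x hx
      linarith
    rwa [h2] at h
  -- decay packaging
  have key : ∀ g : ℝ → ℝ, (∀ n : ℕ, ∃ C : ℝ, ∀ t : ℝ, 0 ≤ t → |t ^ n * g t| ≤ C) →
      ∃ K : ℝ, 0 ≤ K ∧ ∀ t : ℝ, 0 ≤ t → |g t| * (1 + t) ^ 7 ≤ K := by
    intro g h
    choose C hC using h
    refine ⟨|C 0| + 7*|C 1| + 21*|C 2| + 35*|C 3| + 35*|C 4| + 21*|C 5| + 7*|C 6| + |C 7|,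
      by positivity, ?_⟩
    intro t ht
    have e : ∀ n : ℕ, t ^ n * |g t| ≤ |C n| := by
      intro n
      calc t ^ n * |g t| = |t ^ n * g t| := by
            rw [abs_mul, abs_pow, abs_of_nonneg ht]
        _ ≤ C n := hC n t ht
        _ ≤ |C n| := le_abs_self _
    nlinarith [e 0, e 1, e 2, e 3, e 4, e 5, e 6, e 7]
  obtain ⟨Kf, hKf0, hKf⟩ := key f (fun n => by simpa using hdecay n 0)
  obtain ⟨Kd, hKd0, hKd⟩ := key D (fun n => by rw [hD]; simpa [iteratedDeriv_one] using hdecay n 1)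
  set K := Kf + Kd with hKdef
  have hK0 : 0 ≤ K := by positivity
  have hKf' : ∀ t : ℝ, 0 ≤ t → |f t| * (1 + t) ^ 7 ≤ K := fun t ht =>
    le_trans (hKf t ht) (by simp [hKdef]; linarith)
  have hKd' : ∀ t : ℝ, 0 ≤ t → |D t| * (1 + t) ^ 7 ≤ K := fun t ht =>
    le_trans (hKd t ht) (by simp [hKdef]; linarith)
  have hone : ∀ t : ℝ, 0 ≤ t → (1:ℝ) ≤ (1 + t) ^ 7 := by
    intro t ht
    calc (1:ℝ) = 1 ^ 7 := by norm_num
      _ ≤ (1 + t) ^ 7 := pow_le_pow_left₀ zero_le_one (by linarith) 7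
  have hbf : ∀ t : ℝ, 0 ≤ t → |f t| ≤ K := by
    intro t ht
    calc |f t| = |f t| * 1 := (mul_one _).symm
      _ ≤ |f t| * (1 + t) ^ 7 := mul_le_mul_of_nonneg_left (hone t ht) (abs_nonneg _)
      _ ≤ K := hKf' t ht
  have hbd : ∀ t : ℝ, 0 ≤ t → |D t| ≤ K := by
    intro t ht
    calc |D t| = |D t| * 1 := (mul_one _).symm
      _ ≤ |D t| * (1 + t) ^ 7 := mul_le_mul_of_nonneg_left (hone t ht) (abs_nonneg _)
      _ ≤ K := hKd' t ht
  -- product bound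
  have pbound : ∀ t : ℝ, 0 ≤ t → ∀ p u v : ℝ, |p| ≤ (1 + t) ^ 5 → |u| * (1 + t) ^ 7 ≤ K →
      |v| ≤ K → |p * u * v| * (1 + t) ^ 2 ≤ K ^ 2 := by
    intro t ht p u v hp hu hv
    have hs : (0:ℝ) ≤ 1 + t := by linarith
    have h1 : |p * u * v| * (1 + t) ^ 2 = |p| * (1 + t) ^ 2 * |u| * |v| := by
      rw [abs_mul, abs_mul]; ring
    rw [h1]
    calc |p| * (1 + t) ^ 2 * |u| * |v| ≤ (1 + t) ^ 5 * (1 + t) ^ 2 * |u| * |v| := by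
          gcongr
      _ = (|u| * (1 + t) ^ 7) * |v| := by ring
      _ ≤ K * K := mul_le_mul hu hv (abs_nonneg _) hK0
      _ = K ^ 2 := (sq K).symm
  have poly_bound : ∀ t : ℝ, 0 ≤ t → ∀ a b : ℕ, a + b ≤ 5 → |t ^ a * (t - α) ^ b| ≤ (1 + t) ^ 5 := by
    intro t ht a b hab
    have h1 : |t - α| ≤ 1 + t := by rw [abs_le]; constructor <;> linarith
    have h2 : (1:ℝ) ≤ 1 + t := by linarith
    calc |t ^ a * (t - α) ^ b| = t ^ a * |t - α| ^ b := by
          rw [abs_mul, abs_pow, abs_pow, abs_of_nonneg ht]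
      _ ≤ (1 + t) ^ a * (1 + t) ^ b :=
          mul_le_mul (pow_le_pow_left₀ ht (by linarith) a)
            (pow_le_pow_left₀ (abs_nonneg _) h1 b) (pow_nonneg (abs_nonneg _) b)
            (pow_nonneg (by linarith) a)
      _ = (1 + t) ^ (a + b) := (pow_add _ _ _).symm
      _ ≤ (1 + t) ^ 5 := pow_le_pow_right₀ h2 hab
  have atomb : ∀ (a b : ℕ), a + b ≤ 5 → ∀ u v : ℝ → ℝ,
      (∀ t : ℝ, 0 ≤ t → |u t| * (1 + t) ^ 7 ≤ K) → (∀ t : ℝ, 0 ≤ t → |v t| ≤ K) →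
      ∀ t : ℝ, 0 ≤ t → |t ^ a * (t - α) ^ b * u t * v t| * (1 + t) ^ 2 ≤ K ^ 2 :=
    fun a b hab u v hu hv t ht =>
      pbound t ht _ _ _ (poly_bound t ht a b hab) (hu t ht) (hv t ht)
  -- integrability / limits from bounds
  have normbd : ∀ g : ℝ → ℝ, (∀ t : ℝ, 0 ≤ t → |g t| * (1 + t) ^ 2 ≤ K ^ 2) →
      ∀ t : ℝ, 0 ≤ t → ‖g t‖ ≤ K ^ 2 * (1 + t ^ 2)⁻¹ := by
    intro g hgb t ht
    have h1 : (0:ℝ) < 1 + t ^ 2 := by positivity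
    have h3 : 1 + t ^ 2 ≤ (1 + t) ^ 2 := by nlinarith
    rw [Real.norm_eq_abs, ← div_eq_mul_inv, le_div_iff₀ h1]
    calc |g t| * (1 + t ^ 2) ≤ |g t| * (1 + t) ^ 2 :=
          mul_le_mul_of_nonneg_left h3 (abs_nonneg _)
      _ ≤ K ^ 2 := hgb t ht
  have masterInt : ∀ g : ℝ → ℝ, Continuous g → (∀ t : ℝ, 0 ≤ t → |g t| * (1 + t) ^ 2 ≤ K ^ 2) →
      IntegrableOn g (Set.Ioi (0:ℝ)) := by
    intro g hgc hgb
    refine MeasureTheory.Integrable.mono' ((integrable_inv_one_add_sq.const_mul (K ^ 2)).restrict)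
      hgc.aestronglyMeasurable.restrict ?_
    rw [MeasureTheory.ae_restrict_iff' measurableSet_Ioi]
    filter_upwards with t ht
    exact normbd g hgb t ht.le
  have masterTend : ∀ g : ℝ → ℝ, (∀ t : ℝ, 0 ≤ t → |g t| * (1 + t) ^ 2 ≤ K ^ 2) →
      Filter.Tendsto g Filter.atTop (nhds 0) := by
    intro g hgb
    refine squeeze_zero_norm' (a := fun t : ℝ => K ^ 2 * (1 + t ^ 2)⁻¹) ?_ ?_
    · filter_upwards [Filter.eventually_ge_atTop (0:ℝ)] with t ht using normbd g hgb t ht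
      
    · have h5 : Filter.Tendsto (fun t : ℝ => 1 + t ^ 2) Filter.atTop Filter.atTop :=
        Filter.tendsto_atTop_add_const_left _ 1 (Filter.tendsto_pow_atTop (two_ne_zero))
      have h6 : Filter.Tendsto (fun t : ℝ => (1 + t ^ 2)⁻¹) Filter.atTop (nhds 0) :=
        h5.inv_tendsto_atTop
      simpa using h6.const_mul (K ^ 2)
  -- FTC on Ioi 0
  have ftc : ∀ G g : ℝ → ℝ, (∀ x ∈ Set.Ici (0:ℝ), HasDerivAt G (g x) x) →
      IntegrableOn g (Set.Ioi (0:ℝ)) → Filter.Tendsto G Filter.atTop (nhds 0) →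
      (∫ t in Set.Ioi (0:ℝ), g t) = -G 0 := by
    intro G g hd hi htd
    have := integral_Ioi_of_hasDerivAt_of_tendsto' hd hi htd
    simpa using this
  have hcf : Continuous f := hf1.continuous
  have hcD : Continuous D := hf2.continuous
  -- integrability of the atoms
  have intP : IntegrableOn (fun t : ℝ => D t ^ 2) (Set.Ioi (0:ℝ)) := by
    refine masterInt _ (by fun_prop) ?_
    intro t ht
    rw [show D t ^ 2 = t ^ 0 * (t - α) ^ 0 * D t * D t by ring]
    exact atomb 0 0 (by norm_num) D D hKd' hbd t ht
  have intQ : IntegrableOn (fun t : ℝ => (t - α) ^ 2 * f t ^ 2) (Set.Ioi (0:ℝ)) := by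
    refine masterInt _ (by fun_prop) ?_
    intro t ht
    rw [show (t - α) ^ 2 * f t ^ 2 = t ^ 0 * (t - α) ^ 2 * f t * f t by ring]
    exact atomb 0 2 (by norm_num) f f hKf' hbf t ht
  have intR : IntegrableOn (fun t : ℝ => f t * D t) (Set.Ioi (0:ℝ)) := by
    refine masterInt _ (by fun_prop) ?_
    intro t ht
    rw [show f t * D t = t ^ 0 * (t - α) ^ 0 * f t * D t by ring]
    exact atomb 0 0 (by norm_num) f D hKf' hbd t ht
  have intI1 : IntegrableOn (fun t : ℝ => t * D t ^ 2) (Set.Ioi (0:ℝ)) := by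
    refine masterInt _ (by fun_prop) ?_
    intro t ht
    rw [show t * D t ^ 2 = t ^ 1 * (t - α) ^ 0 * D t * D t by ring]
    exact atomb 1 0 (by norm_num) D D hKd' hbd t ht
  have intA : IntegrableOn (fun t : ℝ => t * (t - α) ^ 2 * f t ^ 2) (Set.Ioi (0:ℝ)) := by
    refine masterInt _ (by fun_prop) ?_
    intro t ht
    rw [show t * (t - α) ^ 2 * f t ^ 2 = t ^ 1 * (t - α) ^ 2 * f t * f t by ring]
    exact atomb 1 2 (by norm_num) f f hKf' hbf t ht
  have intI2 : IntegrableOn (fun t : ℝ => t * (t - α) * f t ^ 2) (Set.Ioi (0:ℝ)) := by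
    refine masterInt _ (by fun_prop) ?_
    intro t ht
    rw [show t * (t - α) * f t ^ 2 = t ^ 1 * (t - α) ^ 1 * f t * f t by ring]
    exact atomb 1 1 (by norm_num) f f hKf' hbf t ht
  have intB : IntegrableOn (fun t : ℝ => t ^ 2 * (t - α) * f t ^ 2) (Set.Ioi (0:ℝ)) := by
    refine masterInt _ (by fun_prop) ?_
    intro t ht
    rw [show t ^ 2 * (t - α) * f t ^ 2 = t ^ 2 * (t - α) ^ 1 * f t * f t by ring]
    exact atomb 2 1 (by norm_num) f f hKf' hbf t ht
  have hid : ∀ x : ℝ, HasDerivAt (fun y : ℝ => y) 1 x := fun x => hasDerivAt_id x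
  -- Equation 1 : ∫ D² + ∫ (t-α)²f² = α,  G = f·D
  have h1 : (∫ t in Set.Ioi (0:ℝ), D t ^ 2) + (∫ t in Set.Ioi (0:ℝ), (t - α) ^ 2 * f t ^ 2) = α := by
    have hder : ∀ x ∈ Set.Ici (0:ℝ), HasDerivAt (fun t => f t * D t)
        (D x ^ 2 + (x - α) ^ 2 * f x ^ 2) x := by
      intro x hx
      have h := (hDf x).mul (hDD x hx)
      exact h.congr_deriv (by ring)
    have htend : Filter.Tendsto (fun t => f t * D t) Filter.atTop (nhds 0) := by
      refine masterTend _ ?_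
      intro t ht
      rw [show f t * D t = t ^ 0 * (t - α) ^ 0 * f t * D t by ring]
      exact atomb 0 0 (by norm_num) f D hKf' hbd t ht
    have h := ftc _ _ hder (intP.add intQ) htend
    rw [MeasureTheory.integral_add intP intQ, hf0, hfd0] at h
    linear_combination h
  -- Equation 2 : 2 ∫ f·D = -1,  G = f·f
  have h2 : 2 * (∫ t in Set.Ioi (0:ℝ), f t * D t) = -1 := by
    have hder : ∀ x ∈ Set.Ici (0:ℝ), HasDerivAt (fun t => f t * f t)
        (2 * (f x * D x)) x := by
      intro x hx
      have h := (hDf x).mul (hDf x)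
      exact h.congr_deriv (by ring)
    have htend : Filter.Tendsto (fun t => f t * f t) Filter.atTop (nhds 0) := by
      refine masterTend _ ?_
      intro t ht
      rw [show f t * f t = t ^ 0 * (t - α) ^ 0 * f t * f t by ring]
      exact atomb 0 0 (by norm_num) f f hKf' hbf t ht
    have h := ftc _ _ hder (intR.const_mul 2) htend
    rw [MeasureTheory.integral_const_mul, hf0] at h
    linear_combination h
  -- Equation 3 : ∫ f·D + ∫ t·D² + ∫ t(t-α)²f² = 0,  G = t·f·D
  have h3 : (∫ t in Set.Ioi (0:ℝ), f t * D t) + ((∫ t in Set.Ioi (0:ℝ), t * D t ^ 2) +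
      (∫ t in Set.Ioi (0:ℝ), t * (t - α) ^ 2 * f t ^ 2)) = 0 := by
    have hder : ∀ x ∈ Set.Ici (0:ℝ), HasDerivAt (fun t => t * (f t * D t))
        (f x * D x + (x * D x ^ 2 + x * (x - α) ^ 2 * f x ^ 2)) x := by
      intro x hx
      have h := (hid x).mul ((hDf x).mul (hDD x hx))
      exact h.congr_deriv (by simp only [Pi.mul_apply, Pi.pow_apply, Pi.sub_apply]; ring)
    have htend : Filter.Tendsto (fun t => t * (f t * D t)) Filter.atTop (nhds 0) := by
      refine masterTend _ ?_
      intro t ht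
      rw [show t * (f t * D t) = t ^ 1 * (t - α) ^ 0 * f t * D t by ring]
      exact atomb 1 0 (by norm_num) f D hKf' hbd t ht
    have intI1A : IntegrableOn (fun t : ℝ => t * D t ^ 2 + t * (t - α) ^ 2 * f t ^ 2)
        (Set.Ioi (0:ℝ)) := intI1.add intA
    have h := ftc _ _ hder (intR.add intI1A) htend
    rw [MeasureTheory.integral_add intR intI1A,
      MeasureTheory.integral_add intI1 intA] at h
    linear_combination h
  -- Equation 4 : ∫ D² - 3 ∫ (t-α)²f² = 0,  G = (t-α)(D·D) - (t-α)³(f·f)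
  have h4 : (∫ t in Set.Ioi (0:ℝ), D t ^ 2) -
      3 * (∫ t in Set.Ioi (0:ℝ), (t - α) ^ 2 * f t ^ 2) = 0 := by
    have hder : ∀ x ∈ Set.Ici (0:ℝ),
        HasDerivAt (fun t => (t - α) * (D t * D t) - (t - α) ^ 3 * (f t * f t))
        (D x ^ 2 - 3 * ((x - α) ^ 2 * f x ^ 2)) x := by
      intro x hx
      have ha := ((hid x).sub_const α).mul ((hDD x hx).mul (hDD x hx))
      have hb := (((hid x).sub_const α).pow 3).mul ((hDf x).mul (hDf x))
      have h := ha.sub hb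
      exact h.congr_deriv (by simp only [Pi.mul_apply, Pi.pow_apply, Pi.sub_apply]; ring)
    have htend : Filter.Tendsto (fun t => (t - α) * (D t * D t) - (t - α) ^ 3 * (f t * f t))
        Filter.atTop (nhds 0) := by
      have T1 : Filter.Tendsto (fun t => (t - α) * (D t * D t)) Filter.atTop (nhds 0) := by
        refine masterTend _ ?_
        intro t ht
        rw [show (t - α) * (D t * D t) = t ^ 0 * (t - α) ^ 1 * D t * D t by ring]
        exact atomb 0 1 (by norm_num) D D hKd' hbd t ht
      have T2 : Filter.Tendsto (fun t => (t - α) ^ 3 * (f t * f t)) Filter.atTop (nhds 0) := by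
        refine masterTend _ ?_
        intro t ht
        rw [show (t - α) ^ 3 * (f t * f t) = t ^ 0 * (t - α) ^ 3 * f t * f t by ring]
        exact atomb 0 3 (by norm_num) f f hKf' hbf t ht
      simpa using T1.sub T2
    have h := ftc _ _ hder (intP.sub (intQ.const_mul 3)) htend
    rw [MeasureTheory.integral_sub intP (intQ.const_mul 3),
      MeasureTheory.integral_const_mul, hf0, hfd0] at h
    linear_combination h
  -- Equation 5 : ∫ D² - ∫ (t-α)²f² - 2 ∫ t(t-α)f² = 0,  G = t(D·D) - t(t-α)²(f·f)
  have h5 : (∫ t in Set.Ioi (0:ℝ), D t ^ 2) - (∫ t in Set.Ioi (0:ℝ), (t - α) ^ 2 * f t ^ 2) -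
      2 * (∫ t in Set.Ioi (0:ℝ), t * (t - α) * f t ^ 2) = 0 := by
    have hder : ∀ x ∈ Set.Ici (0:ℝ),
        HasDerivAt (fun t => t * (D t * D t) - t * (t - α) ^ 2 * (f t * f t))
        (D x ^ 2 - (x - α) ^ 2 * f x ^ 2 - 2 * (x * (x - α) * f x ^ 2)) x := by
      intro x hx
      have ha := (hid x).mul ((hDD x hx).mul (hDD x hx))
      have hb := (((hid x).mul (((hid x).sub_const α).pow 2))).mul ((hDf x).mul (hDf x))
      have h := ha.sub hb
      exact h.congr_deriv (by simp only [Pi.mul_apply, Pi.pow_apply, Pi.sub_apply]; ring)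
    have htend : Filter.Tendsto (fun t => t * (D t * D t) - t * (t - α) ^ 2 * (f t * f t))
        Filter.atTop (nhds 0) := by
      have T1 : Filter.Tendsto (fun t => t * (D t * D t)) Filter.atTop (nhds 0) := by
        refine masterTend _ ?_
        intro t ht
        rw [show t * (D t * D t) = t ^ 1 * (t - α) ^ 0 * D t * D t by ring]
        exact atomb 1 0 (by norm_num) D D hKd' hbd t ht
      have T2 : Filter.Tendsto (fun t => t * (t - α) ^ 2 * (f t * f t)) Filter.atTop (nhds 0) := by
        refine masterTend _ ?_
        intro t ht
        rw [show t * (t - α) ^ 2 * (f t * f t) = t ^ 1 * (t - α) ^ 2 * f t * f t by ring]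
        exact atomb 1 2 (by norm_num) f f hKf' hbf t ht
      simpa using T1.sub T2
    have intPQ : IntegrableOn (fun t : ℝ => D t ^ 2 - (t - α) ^ 2 * f t ^ 2)
        (Set.Ioi (0:ℝ)) := intP.sub intQ
    have h := ftc _ _ hder (intPQ.sub (intI2.const_mul 2)) htend
    rw [MeasureTheory.integral_sub intPQ (intI2.const_mul 2),
      MeasureTheory.integral_sub intP intQ, MeasureTheory.integral_const_mul] at h
    linear_combination h
  -- Equation 6 : 2∫ t·D² - 2∫ t(t-α)²f² - 2∫ t²(t-α)f² = 0,  G = t²(D·D) - t²(t-α)²(f·f)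
  have h6 : 2 * (∫ t in Set.Ioi (0:ℝ), t * D t ^ 2) -
      2 * (∫ t in Set.Ioi (0:ℝ), t * (t - α) ^ 2 * f t ^ 2) -
      2 * (∫ t in Set.Ioi (0:ℝ), t ^ 2 * (t - α) * f t ^ 2) = 0 := by
    have hder : ∀ x ∈ Set.Ici (0:ℝ),
        HasDerivAt (fun t => t ^ 2 * (D t * D t) - t ^ 2 * (t - α) ^ 2 * (f t * f t))
        (2 * (x * D x ^ 2) - 2 * (x * (x - α) ^ 2 * f x ^ 2) -
          2 * (x ^ 2 * (x - α) * f x ^ 2)) x := by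
      intro x hx
      have ha := ((hid x).pow 2).mul ((hDD x hx).mul (hDD x hx))
      have hb := (((hid x).pow 2).mul (((hid x).sub_const α).pow 2)).mul ((hDf x).mul (hDf x))
      have h := ha.sub hb
      exact h.congr_deriv (by simp only [Pi.mul_apply, Pi.pow_apply, Pi.sub_apply]; ring)
    have htend : Filter.Tendsto
        (fun t => t ^ 2 * (D t * D t) - t ^ 2 * (t - α) ^ 2 * (f t * f t))
        Filter.atTop (nhds 0) := by
      have T1 : Filter.Tendsto (fun t => t ^ 2 * (D t * D t)) Filter.atTop (nhds 0) := by
        refine masterTend _ ?_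
        intro t ht
        rw [show t ^ 2 * (D t * D t) = t ^ 2 * (t - α) ^ 0 * D t * D t by ring]
        exact atomb 2 0 (by norm_num) D D hKd' hbd t ht
      have T2 : Filter.Tendsto (fun t => t ^ 2 * (t - α) ^ 2 * (f t * f t))
          Filter.atTop (nhds 0) := by
        refine masterTend _ ?_
        intro t ht
        rw [show t ^ 2 * (t - α) ^ 2 * (f t * f t) = t ^ 2 * (t - α) ^ 2 * f t * f t by ring]
        exact atomb 2 2 (by norm_num) f f hKf' hbf t ht
      simpa using T1.sub T2
    have intC1 : IntegrableOn
        (fun t : ℝ => 2 * (t * D t ^ 2) - 2 * (t * (t - α) ^ 2 * f t ^ 2))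
        (Set.Ioi (0:ℝ)) := (intI1.const_mul 2).sub (intA.const_mul 2)
    have h := ftc _ _ hder (intC1.sub (intB.const_mul 2)) htend
    rw [MeasureTheory.integral_sub intC1 (intB.const_mul 2),
      MeasureTheory.integral_sub (intI1.const_mul 2) (intA.const_mul 2),
      MeasureTheory.integral_const_mul, MeasureTheory.integral_const_mul,
      MeasureTheory.integral_const_mul] at h
    linear_combination h
  -- Equation 7 : ∫ t²(t-α)f² = ∫ t(t-α)²f² + α ∫ t(t-α)f²  (pointwise algebra)
  have h7 : (∫ t in Set.Ioi (0:ℝ), t ^ 2 * (t - α) * f t ^ 2) =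
      (∫ t in Set.Ioi (0:ℝ), t * (t - α) ^ 2 * f t ^ 2) +
      α * (∫ t in Set.Ioi (0:ℝ), t * (t - α) * f t ^ 2) := by
    have hfe : (fun t : ℝ => t ^ 2 * (t - α) * f t ^ 2) =
        fun t : ℝ => t * (t - α) ^ 2 * f t ^ 2 + α * (t * (t - α) * f t ^ 2) := by
      funext t; ring
    rw [hfe, MeasureTheory.integral_add intA (intI2.const_mul α),
      MeasureTheory.integral_const_mul]
  -- from h1, h4, h5 : ∫ t(t-α)f² = α/4
  have hI2v : (∫ t in Set.Ioi (0:ℝ), t * (t - α) * f t ^ 2) = α / 4 := by linarith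
  have h7' : (∫ t in Set.Ioi (0:ℝ), t ^ 2 * (t - α) * f t ^ 2) =
      (∫ t in Set.Ioi (0:ℝ), t * (t - α) ^ 2 * f t ^ 2) + α ^ 2 / 4 := by
    rw [hI2v] at h7
    linear_combination h7
  -- final assembly
  have hsplit : (fun t : ℝ => (t ^ 2 * (t - α) - t * (t - α) ^ 2) * f t ^ 2) =
      fun t : ℝ => t ^ 2 * (t - α) * f t ^ 2 - t * (t - α) ^ 2 * f t ^ 2 := by
    funext t; ring
  rw [hsplit, MeasureTheory.integral_sub intB intA]
  linarith [h2, h3, h6, h7']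
end
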